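/- Let n = 8 f_m + 1 with m ≥ 1, s a positive integer, and A : {0,...,n} → ℝ with A_i ≥ 0, A_0 = 1, ∑_i A_i = 2^s, satisfying A_1 = ⟨3n - 4x⟩, A_2 = (1/2)⟨(4x - 3n + 1)² - 3n - 1⟩, and ∑_{i even} A_i ≥ 2^{s-1}. Then 2^s > 3n + 5, i.e., s ≥ 2m + 4. -/

import Mathlib

/-!
With `c = (3n + 1)/4 = 2·4^m - 1`, an odd integer, test the linear-programming constraints
against `(4x - 3n - 1)² = 16 (x - c)²`. The constraints on `A₁, A₂` give its average exactly,
`3n + 1 + 4A₁ + 2A₂`. On the other hand it is at least `16` at every even point, since `c` is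
odd, and the even points carry at least half of the mass; keeping the exact values at `0, 1, 2`,
the two estimates are incompatible as soon as `2^s ≤ 3n + 5`.
-/

def f (m : ℕ) : ℕ := (4 ^ m - 1) / 3

open Finset

lemma three_mul_f_add_one (m : ℕ) : 3 * f m + 1 = 4 ^ m := by
  have hmod : 4 ^ m % 3 = 1 := by rw [Nat.pow_mod]; norm_num
  have hpos : 0 < 4 ^ m := by positivity
  unfold f
  omega

lemma one_le_sq_sub_of_even_of_odd {i c : ℤ} (hi : Even i) (hc : Odd c) : 1 ≤ (i - c) ^ 2 := by
  have hne : i - c ≠ 0 := fun h => Int.not_even_iff_odd.mpr (h ▸ hi.sub_odd hc) Even.zero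
  exact (one_le_sq_iff_one_le_abs _).mpr (Int.one_le_abs hne)

lemma add_add_le_sum_range {M : Type*} [AddCommMonoid M] [PartialOrder M]
    [IsOrderedAddMonoid M] {n : ℕ} (hn : 2 ≤ n) {F : ℕ → M} (hF : ∀ i ≤ n, 0 ≤ F i) :
    F 0 + F 1 + F 2 ≤ ∑ i ∈ range (n + 1), F i := by
  have h3 : ∑ i ∈ range 3, F i = F 0 + F 1 + F 2 := by simp [sum_range_succ]
  rw [← h3]
  exact sum_le_sum_of_subset_of_nonneg (range_subset_range.mpr (by omega))
    fun i hi _ => hF i (Nat.lt_succ_iff.mp (mem_range.mp hi))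

lemma sum_sq_sub_ge {n : ℕ} (hn : 2 ≤ n) {c : ℕ} (hc : Odd c) {A : ℕ → ℝ}
    (hA : ∀ i ≤ n, 0 ≤ A i) :
    ((c : ℝ) ^ 2 - 1) * A 0 + (1 - c) ^ 2 * A 1 + ((2 - c) ^ 2 - 1) * A 2
        + ∑ i ∈ range (n + 1) with Even i, A i
      ≤ ∑ i ∈ range (n + 1), ((i : ℝ) - c) ^ 2 * A i := by
  set F : ℕ → ℝ := fun i => (((i : ℝ) - c) ^ 2 - if Even i then 1 else 0) * A i
  have hF : ∀ i ≤ n, 0 ≤ F i := by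
    intro i hi
    refine mul_nonneg (sub_nonneg.mpr ?_) (hA i hi)
    split_ifs with he
    · exact_mod_cast one_le_sq_sub_of_even_of_odd (Int.even_coe_nat i |>.mpr he)
        (Int.odd_coe_nat c |>.mpr hc)
    · positivity
  have hsplit : ∑ i ∈ range (n + 1), F i = ∑ i ∈ range (n + 1), ((i : ℝ) - c) ^ 2 * A i
      - ∑ i ∈ range (n + 1) with Even i, A i := by
    rw [sum_filter, ← sum_sub_distrib]
    exact sum_congr rfl fun i _ => by simp only [F]; split_ifs <;> ring
  have h012 := add_add_le_sum_range hn hF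
  simp only [F, Nat.cast_zero, Nat.cast_one, Nat.cast_ofNat, Even.zero, even_two,
    Nat.not_even_one, if_true, if_false] at h012
  linarith

lemma sum_sq_sub_eq_of_moments {n : ℕ} {c T : ℝ} (hc : 4 * c = 3 * n + 1) (hT : T ≠ 0)
    {A : ℕ → ℝ} (hsum : ∑ i ∈ range (n + 1), A i = T)
    (h1 : A 1 = (1 / T) * ∑ i ∈ range (n + 1), (3 * n - 4 * i : ℝ) * A i)
    (h2 : A 2 = (1 / T) * ∑ i ∈ range (n + 1),
      (1 / 2) * ((4 * i - 3 * n + 1 : ℝ) ^ 2 - 3 * n - 1) * A i) :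
    16 * ∑ i ∈ range (n + 1), ((i : ℝ) - c) ^ 2 * A i = T * (4 * c + 4 * A 1 + 2 * A 2) := by
  have e1 : ∑ i ∈ range (n + 1), (3 * n - 4 * i : ℝ) * A i = T * A 1 := by
    rw [h1]; field_simp
  have e2 : ∑ i ∈ range (n + 1), (1 / 2) * ((4 * i - 3 * n + 1 : ℝ) ^ 2 - 3 * n - 1) * A i
      = T * A 2 := by
    rw [h2]; field_simp
  have hsplit : 16 * ∑ i ∈ range (n + 1), ((i : ℝ) - c) ^ 2 * A i
      = 4 * c * ∑ i ∈ range (n + 1), A i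
        + 4 * ∑ i ∈ range (n + 1), (3 * n - 4 * i : ℝ) * A i
        + 2 * ∑ i ∈ range (n + 1), (1 / 2) * ((4 * i - 3 * n + 1 : ℝ) ^ 2 - 3 * n - 1) * A i := by
    simp only [mul_sum, ← sum_add_distrib]
    exact sum_congr rfl fun i _ => by linear_combination (4 * c + 3 * n - 8 * i) * A i * hc
  rw [hsplit, e1, e2, hsum]
  ring

lemma add_four_lt_of_sq_moment {c T a₁ a₂ E : ℝ} (hc : 4 ≤ c) (ha₁ : 0 ≤ a₁) (ha₂ : 0 ≤ a₂)
    (hE : T ≤ 2 * E)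
    (h : 16 * ((c ^ 2 - 1) + (1 - c) ^ 2 * a₁ + ((2 - c) ^ 2 - 1) * a₂ + E)
      ≤ T * (4 * c + 4 * a₁ + 2 * a₂)) :
    4 * c + 4 < T := by
  by_contra! hT
  have h₁ : 0 ≤ a₁ * (8 * (c - 1) ^ 2 - 2 * T) := mul_nonneg ha₁ (by nlinarith)
  have h₂ : 0 ≤ a₂ * (8 * ((c - 2) ^ 2 - 1) - T) := mul_nonneg ha₂ (by nlinarith)
  have h₃ : (c - 2) * T ≤ (c - 2) * (4 * c + 4) := mul_le_mul_of_nonneg_left hT (by linarith)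
  linarith

theorem lp_bound_8fm_add_one_general (m : ℕ) (hm : 1 ≤ m) (n : ℕ)
    (hn : n = 8 * f m + 1)
    (s : ℕ) (A : ℕ → ℝ)
    (hA0 : A 0 = 1)
    (hApos : ∀ i ≤ n, 0 ≤ A i)
    (hAsum : ∑ i ∈ Finset.range (n + 1), A i = 2 ^ s)
    (hA1 : A 1 = (1 / 2 ^ s) * ∑ i ∈ Finset.range (n + 1), (3 * n - 4 * i : ℝ) * A i)
    (hA2 : A 2 = (1 / 2 ^ s) * ∑ i ∈ Finset.range (n + 1),
      (1 / 2) * ((4 * i - 3 * n + 1 : ℝ) ^ 2 - 3 * n - 1) * A i)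
    (hEven : ∑ i ∈ (Finset.range (n + 1)).filter (fun i => Even i), A i
      ≥ 2 ^ (s - 1)) :
    (2 : ℝ) ^ s > 3 * n + 5 ∧ 2 * m + 4 ≤ s := by
  have h4m : 4 ≤ 4 ^ m := Nat.le_self_pow (by omega) 4
  have hf := three_mul_f_add_one m
  set c : ℕ := 2 * 4 ^ m - 1
  have hc_odd : Odd c := ⟨4 ^ m - 1, by omega⟩
  have hcn : (4 * c : ℝ) = 3 * n + 1 := by exact_mod_cast (show 4 * c = 3 * n + 1 by omega)
  have hc4 : (4 : ℝ) ≤ c := by exact_mod_cast (show 4 ≤ c by omega)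
  have hE : (2 : ℝ) ^ s ≤ 2 * 2 ^ (s - 1) := by rcases s with _ | s <;> simp [pow_succ, mul_comm]
  have hmoment := sum_sq_sub_eq_of_moments hcn (by positivity) hAsum hA1 hA2
  have hlower := sum_sq_sub_ge (by omega) hc_odd hApos
  rw [hA0, mul_one] at hlower
  have hgt : 4 * (c : ℝ) + 4 < 2 ^ s :=
    add_four_lt_of_sq_moment hc4 (hApos 1 (by omega)) (hApos 2 (by omega))
      (E := ∑ i ∈ range (n + 1) with Even i, A i) (by linarith) (by linarith)
  have hpow : 3 * n + 5 = 2 ^ (2 * m + 3) := by rw [pow_add, pow_mul]; norm_num; omega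
  have hlt : 2 * m + 3 < s := by
    rw [← Nat.pow_lt_pow_iff_right (by norm_num : 1 < 2), ← hpow]
    exact_mod_cast (show ((3 * n + 5 : ℕ) : ℝ) < 2 ^ s by push_cast; linarith)
  exact ⟨by linarith, hlt⟩

theorem lp_bound_8fm_add_one (m : ℕ) (hm : 1 ≤ m) (n : ℕ)
    (hn : n = 8 * f m + 1)
    (s : ℕ) (hs : 1 ≤ s) (A : ℕ → ℝ)
    (hA0 : A 0 = 1)
    (hApos : ∀ i ≤ n, 0 ≤ A i)
    (hAsum : ∑ i ∈ Finset.range (n + 1), A i = 2 ^ s)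
    (hA1 : A 1 = (1 / 2 ^ s) * ∑ i ∈ Finset.range (n + 1), (3 * n - 4 * i : ℝ) * A i)
    (hA2 : A 2 = (1 / 2 ^ s) * ∑ i ∈ Finset.range (n + 1),
      (1 / 2) * ((4 * i - 3 * n + 1 : ℝ) ^ 2 - 3 * n - 1) * A i)
    (hEven : ∑ i ∈ (Finset.range (n + 1)).filter (fun i => Even i), A i
      ≥ 2 ^ (s - 1)) :
    (2 : ℝ) ^ s > 3 * n + 5 ∧ 2 * m + 4 ≤ s :=
  lp_bound_8fm_add_one_general m hm n hn s A hA0 hApos hAsum hA1 hA2 hEven
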